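/- arXiv:2210.13644 — 2 statements merged into one kernel-verified Lean document; each statement's English description precedes it below -/
import Mathlib

section
/- Let (m₁,m₂,m₃,ξ,p) be a collision solution of the reduced two-body system on [t₀, t*), i.e. ξ(t) → +∞ as t → t*⁻. Then m₃ grows at most like ξ^{−1/2}: there exist M > 0 and t₁ ∈ [t₀, t*) such that |m₃(t)|·√(ξ(t)) ≤ M for all t ∈ [t₁, t*). -/
open Filter Set

/-- The filter of approach `t → t*⁻`, where `t* ∈ ℝ ∪ {±∞}` is encoded as an `EReal`:
for finite `t*` this is `𝓝[<] t*`, and for `t* = ⊤` it is `atTop`. -/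
noncomputable def approachFilter (tstar : EReal) : Filter ℝ :=
  Filter.comap (fun t : ℝ => (t : EReal)) (nhdsWithin tstar (Set.Iio tstar))

/-!
Two first integrals control the system: the squared angular momentum `m₁² + m₂² + m₃²`
and the energy `E = p² − m₁p + m₃²ξ² − m₂m₃ξ − ξ`. Completing squares in `p` and in `m₃ξ`
gives `(m₃ξ)² ≤ 2ξ + 2E + m₁² + m₂²`, so along a solution `(m₃ξ)² ≤ 2ξ + K` for a constant
`K`. Once `ξ ≥ max K 1` this yields `m₃²ξ ≤ 3`.
-/

lemma eq_of_hasDerivAt_zero_of_lt {t0 : ℝ} {tstar : EReal} {f : ℝ → ℝ}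
    (hf : ∀ t : ℝ, t0 ≤ t → (t : EReal) < tstar → HasDerivAt f 0 t) :
    ∀ t : ℝ, t0 ≤ t → (t : EReal) < tstar → f t = f t0 := by
  intro t ht0 ht
  have hlt : ∀ s ∈ Icc t0 t, (s : EReal) < tstar := fun s hs =>
    (EReal.coe_le_coe_iff.2 hs.2).trans_lt ht
  exact constant_of_has_deriv_right_zero
    (fun s hs => (hf s hs.1 (hlt s hs)).continuousAt.continuousWithinAt)
    (fun s hs => (hf s hs.1 (hlt s (Ico_subset_Icc_self hs))).hasDerivWithinAt)
    t (right_mem_Icc.2 ht0)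

lemma exists_forall_of_eventually_approachFilter {t0 : ℝ} {tstar : EReal}
    (ht0 : (t0 : EReal) < tstar) {P : ℝ → Prop} (hP : ∀ᶠ t in approachFilter tstar, P t) :
    ∃ t1 : ℝ, (t0 ≤ t1 ∧ (t1 : EReal) < tstar) ∧
      ∀ t : ℝ, t1 ≤ t → (t : EReal) < tstar → P t := by
  rw [approachFilter, eventually_comap] at hP
  obtain ⟨l, hl, hsub⟩ := (mem_nhdsLT_iff_exists_Ioo_subset' ht0).1 hP
  obtain ⟨t1, hmax, ht1⟩ := EReal.lt_iff_exists_real_btwn.1 (max_lt hl ht0)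
  rw [max_lt_iff] at hmax
  refine ⟨t1, ⟨EReal.coe_le_coe_iff.1 hmax.2.le, ht1⟩, fun t ht1t ht => ?_⟩
  exact hsub ⟨hmax.1.trans_le (EReal.coe_le_coe_iff.2 ht1t), ht⟩ t rfl

structure IsReducedTwoBodySolution (t0 : ℝ) (tstar : EReal) (m1 m2 m3 xi p : ℝ → ℝ) :
    Prop where
  hasDerivAt_m1 : ∀ t : ℝ, t0 ≤ t → (t : EReal) < tstar →
    HasDerivAt m1 (xi t * (-(m2 t)^2 + (m3 t)^2 + 2 * m2 t * m3 t * xi t)) t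
  hasDerivAt_m2 : ∀ t : ℝ, t0 ≤ t → (t : EReal) < tstar →
    HasDerivAt m2 (m1 t * m2 t * xi t - m3 t * p t - 2 * m1 t * m3 t * (xi t)^2) t
  hasDerivAt_m3 : ∀ t : ℝ, t0 ≤ t → (t : EReal) < tstar →
    HasDerivAt m3 (m2 t * p t - m1 t * m3 t * xi t) t
  hasDerivAt_xi : ∀ t : ℝ, t0 ≤ t → (t : EReal) < tstar →
    HasDerivAt xi (-((xi t)^2 + 1) * (2 * p t - m1 t)) t
  hasDerivAt_p : ∀ t : ℝ, t0 ≤ t → (t : EReal) < tstar →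
    HasDerivAt p (-((xi t)^2 + 1) * (1 + m2 t * m3 t - 2 * (m3 t)^2 * xi t)) t

def angularMomentumSq (m1 m2 m3 : ℝ) : ℝ := m1^2 + m2^2 + m3^2

def energy (m1 m2 m3 xi p : ℝ) : ℝ := p^2 - m1 * p + m3^2 * xi^2 - m2 * m3 * xi - xi

lemma sq_mul_le_two_mul_add_energy (m1 m2 m3 xi p : ℝ) :
    (m3 * xi)^2 ≤ 2 * xi + 2 * energy m1 m2 m3 xi p + angularMomentumSq m1 m2 m3 := by
  unfold energy angularMomentumSq
  nlinarith [sq_nonneg (2 * p - m1), sq_nonneg (m3 * xi - m2), sq_nonneg m3]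

lemma abs_mul_sqrt_le_sqrt_three {m x K : ℝ} (h : (m * x)^2 ≤ 2 * x + K) (hK : K ≤ x)
    (hx : 0 < x) : |m| * √x ≤ √3 := by
  have hmx : m^2 * x ≤ 3 := le_of_mul_le_mul_right (by nlinarith) hx
  rw [← Real.sqrt_sq_eq_abs, ← Real.sqrt_mul (sq_nonneg m)]
  exact Real.sqrt_le_sqrt hmx

namespace IsReducedTwoBodySolution

variable {t0 : ℝ} {tstar : EReal} {m1 m2 m3 xi p : ℝ → ℝ}

lemma angularMomentumSq_eq (hs : IsReducedTwoBodySolution t0 tstar m1 m2 m3 xi p)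
    (t : ℝ) (ht0 : t0 ≤ t) (ht : (t : EReal) < tstar) :
    angularMomentumSq (m1 t) (m2 t) (m3 t) = angularMomentumSq (m1 t0) (m2 t0) (m3 t0) := by
  refine eq_of_hasDerivAt_zero_of_lt (f := fun s => angularMomentumSq (m1 s) (m2 s) (m3 s))
    (fun s hs0 hs' => ?_) t ht0 ht
  have h1 := hs.hasDerivAt_m1 s hs0 hs'
  have h2 := hs.hasDerivAt_m2 s hs0 hs'
  have h3 := hs.hasDerivAt_m3 s hs0 hs'
  refine (((h1.pow 2).add (h2.pow 2)).add (h3.pow 2)).congr_deriv ?_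
  push_cast
  ring

lemma energy_eq (hs : IsReducedTwoBodySolution t0 tstar m1 m2 m3 xi p)
    (t : ℝ) (ht0 : t0 ≤ t) (ht : (t : EReal) < tstar) :
    energy (m1 t) (m2 t) (m3 t) (xi t) (p t) = energy (m1 t0) (m2 t0) (m3 t0) (xi t0) (p t0) := by
  refine eq_of_hasDerivAt_zero_of_lt
    (f := fun s => energy (m1 s) (m2 s) (m3 s) (xi s) (p s)) (fun s hs0 hs' => ?_) t ht0 ht
  have h1 := hs.hasDerivAt_m1 s hs0 hs'
  have h2 := hs.hasDerivAt_m2 s hs0 hs'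
  have h3 := hs.hasDerivAt_m3 s hs0 hs'
  have h4 := hs.hasDerivAt_xi s hs0 hs'
  have h5 := hs.hasDerivAt_p s hs0 hs'
  refine (((((h5.pow 2).sub (h1.mul h5)).add ((h3.pow 2).mul (h4.pow 2))).sub
    ((h2.mul h3).mul h4)).sub h4).congr_deriv ?_
  simp only [Pi.pow_apply, Pi.mul_apply]
  push_cast
  ring

lemma sq_mul_le (hs : IsReducedTwoBodySolution t0 tstar m1 m2 m3 xi p)
    (t : ℝ) (ht0 : t0 ≤ t) (ht : (t : EReal) < tstar) :
    (m3 t * xi t)^2 ≤ 2 * xi t + (2 * energy (m1 t0) (m2 t0) (m3 t0) (xi t0) (p t0)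
      + angularMomentumSq (m1 t0) (m2 t0) (m3 t0)) := by
  rw [← hs.energy_eq t ht0 ht, ← hs.angularMomentumSq_eq t ht0 ht, ← add_assoc]
  exact sq_mul_le_two_mul_add_energy _ _ _ _ _

end IsReducedTwoBodySolution

/-- Along a collision solution of the reduced two-body system (`ξ(t) → +∞` as `t → t*⁻`),
`m₃` grows at most like `ξ^(−1/2)`: there are `M > 0` and `t₁ ∈ [t₀, t*)` with
`|m₃(t)| · √(ξ(t)) ≤ M` for all `t ∈ [t₁, t*)`. -/
theorem m3_le_inv_sqrt_xi_at_collision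
    (t0 : ℝ) (tstar : EReal) (ht0 : (t0 : EReal) < tstar)
    (m1 m2 m3 xi p : ℝ → ℝ)
    (hm1 : ∀ t : ℝ, t0 ≤ t → (t : EReal) < tstar →
      HasDerivAt m1 (xi t * (-(m2 t)^2 + (m3 t)^2 + 2 * m2 t * m3 t * xi t)) t)
    (hm2 : ∀ t : ℝ, t0 ≤ t → (t : EReal) < tstar →
      HasDerivAt m2 (m1 t * m2 t * xi t - m3 t * p t - 2 * m1 t * m3 t * (xi t)^2) t)
    (hm3 : ∀ t : ℝ, t0 ≤ t → (t : EReal) < tstar →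
      HasDerivAt m3 (m2 t * p t - m1 t * m3 t * xi t) t)
    (hxi : ∀ t : ℝ, t0 ≤ t → (t : EReal) < tstar →
      HasDerivAt xi (-((xi t)^2 + 1) * (2 * p t - m1 t)) t)
    (hp : ∀ t : ℝ, t0 ≤ t → (t : EReal) < tstar →
      HasDerivAt p (-((xi t)^2 + 1) * (1 + m2 t * m3 t - 2 * (m3 t)^2 * xi t)) t)
    (hcoll : Tendsto xi (approachFilter tstar) atTop) :
    ∃ M > (0 : ℝ), ∃ t1 : ℝ, (t0 ≤ t1 ∧ (t1 : EReal) < tstar) ∧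
      ∀ t : ℝ, t1 ≤ t → (t : EReal) < tstar → |m3 t| * Real.sqrt (xi t) ≤ M := by
  have hs : IsReducedTwoBodySolution t0 tstar m1 m2 m3 xi p := ⟨hm1, hm2, hm3, hxi, hp⟩
  set K := 2 * energy (m1 t0) (m2 t0) (m3 t0) (xi t0) (p t0)
    + angularMomentumSq (m1 t0) (m2 t0) (m3 t0)
  obtain ⟨t1, ht1, hlarge⟩ := exists_forall_of_eventually_approachFilter ht0
    (hcoll.eventually (eventually_ge_atTop (max K 1)))
  refine ⟨√3, by positivity, t1, ht1, fun t ht1t ht => ?_⟩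
  have hKxi := max_le_iff.1 (hlarge t ht1t ht)
  exact abs_mul_sqrt_le_sqrt_three (hs.sq_mul_le t (ht1.1.trans ht1t) ht) hKxi.1
    (one_pos.trans_le hKxi.2)
end

section
/- Let (m₁,m₂,m₃,ξ,p) be a collision solution of the reduced two-body system on [t₀, t*) with t* < ∞ and ξ(t) → +∞ as t → t*⁻. Then m₃ decays at least like 1/ξ: there exist M > 0 and t₁ ∈ [t₀, t*) such that |m₃(t)|·ξ(t) ≤ M for all t ∈ [t₁, t*). -/
/-!
Write `P = p - m₁/2` and `u = m₃ξ - m₂/2`. Both `C = m₁² + m₂² + m₃²` and the energy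
`P² + u² - ξ - (m₁² + m₂²)/4` are conserved, and `ξ' = -2(ξ² + 1)P`. Once `ξ` is large, energy
conservation forces `u² ≥ ξ - O(1)` wherever `|P| ≤ 1`, and then `8P' ≥ ξ² + 1` there. So `P`
can neither stay in `[-1, 1]` (then `ξ - 16P` decreases) nor reach `1` (then it stays above `1`
and `ξ` decreases): in both cases `ξ` would remain bounded. Hence `P ≤ -1` near `t*`.

On that tail, with `w = √(ξ² + 1)`, one computes `(ξ/w)' = -2P/w` and `(u/w)' = δ/w` with
`δ = m₃(m₁ - 3p/2)` and `|δ| ≤ -(C + 1)P`. Thus `(C + 1)/2 · ξ/w ± u/w` increase, towards the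
limit `(C + 1)/2` since `u² ≤ ξ + O(1)`; this gives `|u| ≤ (C + 1)/2 · (w - ξ) ≤ (C + 1)/2`.
-/

open Filter Set Topology

theorem monotoneOn_of_hasDerivAt_nonneg {D : Set ℝ} (hD : Convex ℝ D) {f f' : ℝ → ℝ}
    (hf : ∀ x ∈ D, HasDerivAt f (f' x) x) (hf' : ∀ x ∈ D, 0 ≤ f' x) : MonotoneOn f D :=
  monotoneOn_of_hasDerivWithinAt_nonneg hD
    (fun x hx => (hf x hx).continuousAt.continuousWithinAt)
    (fun x hx => (hf x (interior_subset hx)).hasDerivWithinAt)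
    (fun x hx => hf' x (interior_subset hx))

theorem antitoneOn_of_hasDerivAt_nonpos {D : Set ℝ} (hD : Convex ℝ D) {f f' : ℝ → ℝ}
    (hf : ∀ x ∈ D, HasDerivAt f (f' x) x) (hf' : ∀ x ∈ D, f' x ≤ 0) : AntitoneOn f D :=
  antitoneOn_of_hasDerivWithinAt_nonpos hD
    (fun x hx => (hf x hx).continuousAt.continuousWithinAt)
    (fun x hx => (hf x (interior_subset hx)).hasDerivWithinAt)
    (fun x hx => hf' x (interior_subset hx))

theorem eq_of_hasDerivAt_eq_zero {f : ℝ → ℝ} {a T : ℝ} (hf : ∀ t ∈ Ico a T, HasDerivAt f 0 t) :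
    ∀ t ∈ Ico a T, f t = f a := fun t ht =>
  have hsub : Icc a t ⊆ Ico a T := Icc_subset_Ico_right ht.2
  constant_of_has_deriv_right_zero
    (fun x hx => (hf x (hsub hx)).continuousAt.continuousWithinAt)
    (fun x hx => (hf x (hsub (Ico_subset_Icc_self hx))).hasDerivWithinAt) t ⟨ht.1, le_rfl⟩

theorem le_of_hasDerivAt_pos_of_eq {f f' : ℝ → ℝ} {a T c : ℝ}
    (hf : ∀ t ∈ Ico a T, HasDerivAt f (f' t) t) (hpos : ∀ t ∈ Ico a T, f t = c → 0 < f' t)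
    (ha : c ≤ f a) : ∀ t ∈ Ico a T, c ≤ f t := by
  intro t ht
  have hsub : Icc a t ⊆ Ico a T := Icc_subset_Ico_right ht.2
  have := image_le_of_deriv_right_lt_deriv_boundary' (f := fun s => -f s) (f' := fun s => -f' s)
    (B := fun _ => -c) (B' := fun _ => 0)
    (fun x hx => (hf x (hsub hx)).neg.continuousAt.continuousWithinAt)
    (fun x hx => (hf x (hsub (Ico_subset_Icc_self hx))).neg.hasDerivWithinAt) (neg_le_neg ha)
    continuousOn_const (fun _ _ => hasDerivWithinAt_const _ _ _)
    (fun x hx hfx => neg_neg_of_pos (hpos x (hsub (Ico_subset_Icc_self hx)) (neg_inj.1 hfx)))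
    ⟨ht.1, le_rfl⟩
  exact neg_le_neg_iff.1 this

theorem exists_forall_Ico_of_eventually {Q : ℝ → Prop} {a T : ℝ} (ha : a < T)
    (hQ : ∀ᶠ t in 𝓝[<] T, Q t) : ∃ b ∈ Ico a T, ∀ t ∈ Ico b T, Q t := by
  obtain ⟨l, hl, hsub⟩ := mem_nhdsLT_iff_exists_Ico_subset.1 hQ
  exact ⟨max a l, ⟨le_max_left _ _, max_lt ha hl⟩,
    fun t ht => hsub ⟨(le_max_right _ _).trans ht.1, ht.2⟩⟩

theorem exists_lt_of_tendsto_atTop {ξ : ℝ → ℝ} {a T : ℝ} (ha : a < T)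
    (hξ : Tendsto ξ (𝓝[<] T) atTop) (B : ℝ) : ∃ t ∈ Ico a T, B < ξ t := by
  obtain ⟨t, hBt, hat⟩ :=
    ((hξ.eventually (eventually_gt_atTop B)).and (Ioo_mem_nhdsLT ha)).exists
  exact ⟨t, Ioo_subset_Ico_self hat, hBt⟩

theorem le_of_monotoneOn_of_tendsto {g h : ℝ → ℝ} {a T L : ℝ} (hg : MonotoneOn g (Ico a T))
    (hgh : ∀ s ∈ Ico a T, g s ≤ h s) (hh : Tendsto h (𝓝[<] T) (𝓝 L)) :
    ∀ t ∈ Ico a T, g t ≤ L := fun _ ht =>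
  ge_of_tendsto hh <| mem_of_superset (Ioo_mem_nhdsLT ht.2) fun s hs =>
    (hg ht ⟨ht.1.trans hs.1.le, hs.2⟩ hs.1.le).trans (hgh s ⟨ht.1.trans hs.1.le, hs.2⟩)

theorem tendsto_abs_div_sqrt_sq_add_one {α : Type*} {l : Filter α} {u ξ : α → ℝ} {K : ℝ}
    (hξ : Tendsto ξ l atTop) (hu : ∀ᶠ t in l, u t ^ 2 ≤ ξ t + K) :
    Tendsto (fun t => |u t| / √(ξ t ^ 2 + 1)) l (𝓝 0) := by
  have hsq : Tendsto (fun t => u t ^ 2 / (ξ t ^ 2 + 1)) l (𝓝 0) := by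
    refine squeeze_zero' (.of_forall fun t => by positivity) ?_
      ((tendsto_const_nhds (x := (2 : ℝ))).div_atTop hξ)
    filter_upwards [hu, hξ.eventually (eventually_ge_atTop (max K 1))] with t hut hξt
    have h1 : 1 ≤ ξ t := (le_max_right _ _).trans hξt
    have hK : K ≤ ξ t := (le_max_left _ _).trans hξt
    rw [div_le_div_iff₀ (by positivity) (by positivity)]
    nlinarith
  convert hsq.sqrt using 2 with t
  · rw [Real.sqrt_div' _ (by positivity), Real.sqrt_sq_eq_abs]
  · simp

theorem hasDerivAt_div_sqrt_sq_add_one {f ξ : ℝ → ℝ} {f' ξ' t : ℝ} (hf : HasDerivAt f f' t)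
    (hξ : HasDerivAt ξ ξ' t) :
    HasDerivAt (fun s => f s / √(ξ s ^ 2 + 1))
      ((f' * (ξ t ^ 2 + 1) - f t * ξ t * ξ') / √(ξ t ^ 2 + 1) ^ 3) t := by
  have hw0 : √(ξ t ^ 2 + 1) ≠ 0 := by positivity
  have hw2 : √(ξ t ^ 2 + 1) ^ 2 = ξ t ^ 2 + 1 := Real.sq_sqrt (by positivity)
  have hsq : HasDerivAt (fun s => ξ s ^ 2 + 1) (2 * ξ t * ξ') t := by
    simpa using (hξ.fun_pow 2).add_const 1
  have hw : HasDerivAt (fun s => √(ξ s ^ 2 + 1)) (ξ t * ξ' / √(ξ t ^ 2 + 1)) t := by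
    convert hsq.sqrt (by positivity) using 1
    field_simp
  refine (hf.div hw hw0).congr_deriv ?_
  field_simp
  rw [hw2]

theorem le_neg_one_of_tendsto_atTop {P P' ξ : ℝ → ℝ} {a T : ℝ}
    (hP : ∀ t ∈ Ico a T, HasDerivAt P (P' t) t)
    (hξ : ∀ t ∈ Ico a T, HasDerivAt ξ (-2 * (ξ t ^ 2 + 1) * P t) t)
    (hP' : ∀ t ∈ Ico a T, P t ^ 2 ≤ 1 → ξ t ^ 2 + 1 ≤ 8 * P' t)
    (hlim : Tendsto ξ (𝓝[<] T) atTop) : ∀ t ∈ Ico a T, P t ≤ -1 := by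
  intro b hb
  by_contra! hPb
  have hsub : ∀ {c}, c ∈ Ico b T → Ico c T ⊆ Ico a T := fun hc =>
    Ico_subset_Ico_left (hb.1.trans hc.1)
  have hpos : ∀ s ∈ Ico a T, P s ^ 2 = 1 → 0 < P' s := fun s hs hPs => by
    nlinarith [hP' s hs hPs.le, sq_nonneg (ξ s)]
  have hb' : b ∈ Ico b T := ⟨le_rfl, hb.2⟩
  have hlow : ∀ s ∈ Ico b T, -1 ≤ P s :=
    le_of_hasDerivAt_pos_of_eq (fun s hs => hP s (hsub hb' hs))
      (fun s hs hPs => hpos s (hsub hb' hs) (by rw [hPs]; norm_num)) hPb.le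
  by_cases hhigh : ∃ c ∈ Ico b T, 1 ≤ P c
  · obtain ⟨c, hc, hPc⟩ := hhigh
    have hge : ∀ s ∈ Ico c T, 1 ≤ P s :=
      le_of_hasDerivAt_pos_of_eq (fun s hs => hP s (hsub hc hs))
        (fun s hs hPs => hpos s (hsub hc hs) (by rw [hPs]; norm_num)) hPc
    have hanti : AntitoneOn ξ (Ico c T) :=
      antitoneOn_of_hasDerivAt_nonpos (convex_Ico c T) (fun s hs => hξ s (hsub hc hs))
        (fun s hs => by nlinarith [hge s hs, sq_nonneg (ξ s)])
    obtain ⟨s, hs, hlt⟩ := exists_lt_of_tendsto_atTop hc.2 hlim (ξ c)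
    exact (hanti ⟨le_rfl, hc.2⟩ hs hs.1).not_gt hlt
  · push Not at hhigh
    have hanti : AntitoneOn (fun s => ξ s - 16 * P s) (Ico b T) :=
      antitoneOn_of_hasDerivAt_nonpos (convex_Ico b T)
        (fun s hs => (hξ s (hsub hb' hs)).sub ((hP s (hsub hb' hs)).const_mul 16))
        (fun s hs => by
          nlinarith [hP' s (hsub hb' hs) (by nlinarith [hlow s hs, hhigh s hs]), hlow s hs,
            sq_nonneg (ξ s)])
    obtain ⟨s, hs, hlt⟩ := exists_lt_of_tendsto_atTop hb.2 hlim (ξ b - 16 * P b + 16)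
    have := hanti hb' hs hs.1
    simp only at this
    linarith [hhigh s hs]

theorem sq_add_one_le_eight_mul {C L m₂ m₃ x : ℝ} (hm₂ : m₂ ^ 2 ≤ C) (hm₃ : m₃ ^ 2 ≤ C)
    (hL : 0 ≤ L) (hu : x - L ≤ (m₃ * x - m₂ / 2) ^ 2) (hx : 4 * L + 2 * C + 1 ≤ x) :
    x ^ 2 + 1 ≤ 8 * (-(x ^ 2 + 1) * (1 + m₂ * m₃ - 2 * m₃ ^ 2 * x)
      - x * (-m₂ ^ 2 + m₃ ^ 2 + 2 * m₂ * m₃ * x) / 2) := by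
  set u := m₃ * x - m₂ / 2
  have hC : 0 ≤ C := (sq_nonneg m₂).trans hm₂
  have hx0 : 0 < x := by linarith
  have hid : x * (-(x ^ 2 + 1) * (1 + m₂ * m₃ - 2 * m₃ ^ 2 * x)
      - x * (-m₂ ^ 2 + m₃ ^ 2 + 2 * m₂ * m₃ * x) / 2)
      = (x ^ 2 + 1) * (2 * u ^ 2 - x) + m₂ * m₃ * x - m₂ ^ 2 / 2 - m₃ ^ 2 * x ^ 2 / 2 := by
    ring
  have hm₂₃ : -C ≤ m₂ * m₃ := by nlinarith [sq_nonneg (m₂ + m₃)]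
  have hm₃x : m₃ ^ 2 * x ^ 2 ≤ C * x ^ 2 := mul_le_mul_of_nonneg_right hm₃ (sq_nonneg x)
  have hlow : (x ^ 2 + 1) * (x - 2 * L - C) ≤ x * (-(x ^ 2 + 1) * (1 + m₂ * m₃ - 2 * m₃ ^ 2 * x)
      - x * (-m₂ ^ 2 + m₃ ^ 2 + 2 * m₂ * m₃ * x) / 2) := by
    rw [hid]
    nlinarith [mul_le_mul_of_nonneg_left hu (by positivity : (0 : ℝ) ≤ x ^ 2 + 1),
      mul_le_mul_of_nonneg_right hm₂₃ hx0.le, sq_nonneg (x - 1)]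
  have hx8 : (x ^ 2 + 1) * x ≤ 8 * ((x ^ 2 + 1) * (x - 2 * L - C)) := by
    nlinarith [mul_le_mul_of_nonneg_left hx (by positivity : (0 : ℝ) ≤ x ^ 2 + 1)]
  nlinarith

theorem abs_mul_le_mul {C m₁ m₃ l : ℝ} (hm₁ : m₁ ^ 2 ≤ C) (hm₃ : m₃ ^ 2 ≤ C) (hl : 1 ≤ l) :
    |m₃ * (m₁ / 4 + 3 / 2 * l)| ≤ (C + 1) * l := by
  have h13 : |m₃ * m₁| ≤ C := by
    rw [abs_le]; constructor <;> nlinarith [sq_nonneg (m₃ + m₁), sq_nonneg (m₃ - m₁)]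
  have h3 : |m₃| ≤ (C + 1) / 2 := by
    nlinarith [sq_abs m₃, two_mul_le_add_sq |m₃| 1]
  calc |m₃ * (m₁ / 4 + 3 / 2 * l)| = |m₃ * m₁ / 4 + 3 / 2 * l * m₃| := by ring_nf
    _ ≤ |m₃ * m₁| / 4 + 3 / 2 * l * |m₃| := by
      refine (abs_add_le _ _).trans_eq ?_
      rw [abs_div, abs_mul (3 / 2 * l), abs_of_pos (by positivity : (0 : ℝ) < 3 / 2 * l)]
      norm_num
    _ ≤ C / 4 + 3 / 2 * l * ((C + 1) / 2) := by gcongr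
    _ ≤ (C + 1) * l := by nlinarith

theorem le_sqrt_sq_add_one (x : ℝ) : x ≤ √(x ^ 2 + 1) :=
  (le_abs_self x).trans (Real.abs_le_sqrt (by linarith))

theorem sqrt_sq_add_one_le {x : ℝ} (hx : 0 ≤ x) : √(x ^ 2 + 1) ≤ x + 1 :=
  Real.sqrt_le_iff.2 ⟨by positivity, by nlinarith⟩

namespace ReducedTwoBody

structure IsSolution (I : Set ℝ) (m₁ m₂ m₃ ξ p : ℝ → ℝ) : Prop where
  hasDerivAt_m₁ : ∀ t ∈ I,
    HasDerivAt m₁ (ξ t * (-(m₂ t) ^ 2 + (m₃ t) ^ 2 + 2 * m₂ t * m₃ t * ξ t)) t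
  hasDerivAt_m₂ : ∀ t ∈ I,
    HasDerivAt m₂ (m₁ t * m₂ t * ξ t - m₃ t * p t - 2 * m₁ t * m₃ t * (ξ t) ^ 2) t
  hasDerivAt_m₃ : ∀ t ∈ I, HasDerivAt m₃ (m₂ t * p t - m₁ t * m₃ t * ξ t) t
  hasDerivAt_ξ : ∀ t ∈ I, HasDerivAt ξ (-((ξ t) ^ 2 + 1) * (2 * p t - m₁ t)) t
  hasDerivAt_p : ∀ t ∈ I,
    HasDerivAt p (-((ξ t) ^ 2 + 1) * (1 + m₂ t * m₃ t - 2 * (m₃ t) ^ 2 * ξ t)) t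

def momentumSq (m₁ m₂ m₃ : ℝ → ℝ) (t : ℝ) : ℝ := m₁ t ^ 2 + m₂ t ^ 2 + m₃ t ^ 2

noncomputable def energy (m₁ m₂ m₃ ξ p : ℝ → ℝ) (t : ℝ) : ℝ :=
  (p t - m₁ t / 2) ^ 2 + (m₃ t * ξ t - m₂ t / 2) ^ 2 - ξ t - (m₁ t ^ 2 + m₂ t ^ 2) / 4

theorem momentumSq_nonneg (m₁ m₂ m₃ : ℝ → ℝ) (t : ℝ) : 0 ≤ momentumSq m₁ m₂ m₃ t := by
  unfold momentumSq
  positivity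

namespace IsSolution

variable {I : Set ℝ} {m₁ m₂ m₃ ξ p : ℝ → ℝ} {a T t : ℝ}

theorem mono (h : IsSolution I m₁ m₂ m₃ ξ p) {J : Set ℝ} (hJ : J ⊆ I) :
    IsSolution J m₁ m₂ m₃ ξ p :=
  ⟨fun t ht => h.hasDerivAt_m₁ t (hJ ht), fun t ht => h.hasDerivAt_m₂ t (hJ ht),
    fun t ht => h.hasDerivAt_m₃ t (hJ ht), fun t ht => h.hasDerivAt_ξ t (hJ ht),
    fun t ht => h.hasDerivAt_p t (hJ ht)⟩

theorem momentumSq_eq (h : IsSolution (Ico a T) m₁ m₂ m₃ ξ p) (ht : t ∈ Ico a T) :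
    momentumSq m₁ m₂ m₃ t = momentumSq m₁ m₂ m₃ a := by
  refine eq_of_hasDerivAt_eq_zero (fun s hs => ?_) t ht
  refine ((((h.hasDerivAt_m₁ s hs).fun_pow 2).add ((h.hasDerivAt_m₂ s hs).fun_pow 2)).add
    ((h.hasDerivAt_m₃ s hs).fun_pow 2)).congr_deriv ?_
  push_cast
  ring

theorem energy_eq (h : IsSolution (Ico a T) m₁ m₂ m₃ ξ p) (ht : t ∈ Ico a T) :
    energy m₁ m₂ m₃ ξ p t = energy m₁ m₂ m₃ ξ p a := by
  refine eq_of_hasDerivAt_eq_zero (fun s hs => ?_) t ht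
  have hP : HasDerivAt (fun s => p s - m₁ s / 2) _ s :=
    (h.hasDerivAt_p s hs).sub ((h.hasDerivAt_m₁ s hs).div_const 2)
  have hu : HasDerivAt (fun s => m₃ s * ξ s - m₂ s / 2) _ s :=
    ((h.hasDerivAt_m₃ s hs).mul (h.hasDerivAt_ξ s hs)).sub ((h.hasDerivAt_m₂ s hs).div_const 2)
  refine ((((hP.fun_pow 2).add (hu.fun_pow 2)).sub (h.hasDerivAt_ξ s hs)).sub
    ((((h.hasDerivAt_m₁ s hs).fun_pow 2).add
      ((h.hasDerivAt_m₂ s hs).fun_pow 2)).div_const 4)).congr_deriv ?_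
  push_cast
  ring

theorem sq_le_momentumSq (h : IsSolution (Ico a T) m₁ m₂ m₃ ξ p) (ht : t ∈ Ico a T) :
    m₁ t ^ 2 ≤ momentumSq m₁ m₂ m₃ a ∧ m₂ t ^ 2 ≤ momentumSq m₁ m₂ m₃ a ∧
      m₃ t ^ 2 ≤ momentumSq m₁ m₂ m₃ a := by
  have := h.momentumSq_eq ht
  unfold momentumSq at this ⊢
  refine ⟨?_, ?_, ?_⟩ <;> nlinarith [sq_nonneg (m₁ t), sq_nonneg (m₂ t), sq_nonneg (m₃ t)]

theorem sub_le_sq (h : IsSolution (Ico a T) m₁ m₂ m₃ ξ p) (ht : t ∈ Ico a T)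
    (hP : (p t - m₁ t / 2) ^ 2 ≤ 1) :
    ξ t - (|energy m₁ m₂ m₃ ξ p a| + 1) ≤ (m₃ t * ξ t - m₂ t / 2) ^ 2 := by
  have hE : (p t - m₁ t / 2) ^ 2 + (m₃ t * ξ t - m₂ t / 2) ^ 2 - ξ t - (m₁ t ^ 2 + m₂ t ^ 2) / 4
      = energy m₁ m₂ m₃ ξ p a := h.energy_eq ht
  nlinarith [neg_abs_le (energy m₁ m₂ m₃ ξ p a), sq_nonneg (m₁ t), sq_nonneg (m₂ t)]

theorem sq_le_add (h : IsSolution (Ico a T) m₁ m₂ m₃ ξ p) (ht : t ∈ Ico a T) :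
    (m₃ t * ξ t - m₂ t / 2) ^ 2 ≤
      ξ t + (energy m₁ m₂ m₃ ξ p a + momentumSq m₁ m₂ m₃ a / 4) := by
  have hE : (p t - m₁ t / 2) ^ 2 + (m₃ t * ξ t - m₂ t / 2) ^ 2 - ξ t - (m₁ t ^ 2 + m₂ t ^ 2) / 4
      = energy m₁ m₂ m₃ ξ p a := h.energy_eq ht
  have hN : m₁ t ^ 2 + m₂ t ^ 2 + m₃ t ^ 2 = momentumSq m₁ m₂ m₃ a := h.momentumSq_eq ht
  nlinarith [sq_nonneg (p t - m₁ t / 2), sq_nonneg (m₃ t)]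

theorem exists_forall_Ico_nonneg_and_le_neg_one (h : IsSolution (Ico a T) m₁ m₂ m₃ ξ p)
    (ha : a < T) (hlim : Tendsto ξ (𝓝[<] T) atTop) :
    ∃ b ∈ Ico a T, ∀ t ∈ Ico b T, 0 ≤ ξ t ∧ p t - m₁ t / 2 ≤ -1 := by
  set C := momentumSq m₁ m₂ m₃ a
  set L := |energy m₁ m₂ m₃ ξ p a| + 1
  have hC : 0 ≤ C := momentumSq_nonneg m₁ m₂ m₃ a
  have hL : 0 ≤ L := by positivity
  obtain ⟨b, hb, hξb⟩ := exists_forall_Ico_of_eventually ha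
    (hlim.eventually (eventually_ge_atTop (4 * L + 2 * C + 1)))
  have hsub : Ico b T ⊆ Ico a T := Ico_subset_Ico_left hb.1
  have hP := le_neg_one_of_tendsto_atTop (P := fun t => p t - m₁ t / 2)
    (fun t ht => (h.hasDerivAt_p t (hsub ht)).sub ((h.hasDerivAt_m₁ t (hsub ht)).div_const 2))
    (fun t ht => (h.hasDerivAt_ξ t (hsub ht)).congr_deriv (by ring))
    (fun t ht hPt => by
      obtain ⟨-, h₂, h₃⟩ := h.sq_le_momentumSq (hsub ht)
      exact sq_add_one_le_eight_mul h₂ h₃ hL (h.sub_le_sq (hsub ht) hPt) (hξb t ht))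
    hlim
  exact ⟨b, hb, fun t ht => ⟨by linarith [hξb t ht], hP t ht⟩⟩

theorem monotoneOn_add_mul (h : IsSolution I m₁ m₂ m₃ ξ p) (hI : Convex ℝ I) {C σ : ℝ}
    (hm : ∀ t ∈ I, m₁ t ^ 2 ≤ C ∧ m₃ t ^ 2 ≤ C) (hP : ∀ t ∈ I, p t - m₁ t / 2 ≤ -1)
    (hσ : |σ| ≤ 1) :
    MonotoneOn (fun t => (C + 1) / 2 * (ξ t / √(ξ t ^ 2 + 1))
      + σ * ((m₃ t * ξ t - m₂ t / 2) / √(ξ t ^ 2 + 1))) I := by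
  refine monotoneOn_of_hasDerivAt_nonneg hI (fun t ht =>
      ((hasDerivAt_div_sqrt_sq_add_one (h.hasDerivAt_ξ t ht) (h.hasDerivAt_ξ t ht)).const_mul _).add
        ((hasDerivAt_div_sqrt_sq_add_one (f := fun s => m₃ s * ξ s - m₂ s / 2)
          (((h.hasDerivAt_m₃ t ht).mul (h.hasDerivAt_ξ t ht)).sub
            ((h.hasDerivAt_m₂ t ht).div_const 2)) (h.hasDerivAt_ξ t ht)).const_mul σ))
    fun t ht => ?_
  obtain ⟨h₁, h₃⟩ := hm t ht
  have hl : 1 ≤ m₁ t / 2 - p t := by linarith [hP t ht]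
  set l := m₁ t / 2 - p t
  set δ := m₃ t * (m₁ t / 4 + 3 / 2 * l)
  have hδ : |δ| ≤ (C + 1) * l := abs_mul_le_mul h₁ h₃ hl
  have hσδ : 0 ≤ (C + 1) * l + σ * δ := by
    nlinarith [neg_abs_le (σ * δ), abs_mul σ δ, abs_nonneg δ,
      mul_le_mul_of_nonneg_right hσ (abs_nonneg δ)]
  have : 0 ≤ (ξ t ^ 2 + 1) * ((C + 1) * l + σ * δ) / √(ξ t ^ 2 + 1) ^ 3 := by positivity
  convert this using 1
  ring

theorem abs_sub_le (h : IsSolution (Ico a T) m₁ m₂ m₃ ξ p) (hlim : Tendsto ξ (𝓝[<] T) atTop)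
    (hξ : ∀ t ∈ Ico a T, 0 ≤ ξ t) (hP : ∀ t ∈ Ico a T, p t - m₁ t / 2 ≤ -1) {C : ℝ}
    (hm : ∀ t ∈ Ico a T, m₁ t ^ 2 ≤ C ∧ m₃ t ^ 2 ≤ C) :
    ∀ t ∈ Ico a T, |m₃ t * ξ t - m₂ t / 2| ≤ (C + 1) / 2 := by
  intro t ht
  have hC : 0 ≤ C := (sq_nonneg _).trans (hm t ht).1
  have hu := tendsto_abs_div_sqrt_sq_add_one hlim <|
    mem_of_superset (Ico_mem_nhdsLT (ht.1.trans_lt ht.2)) fun s hs => h.sq_le_add hs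
  have hσ : ∀ σ : ℝ, |σ| ≤ 1 → σ * (m₃ t * ξ t - m₂ t / 2) ≤ (C + 1) / 2 := by
    intro σ hσ
    have hle := le_of_monotoneOn_of_tendsto (h.monotoneOn_add_mul (convex_Ico a T) hm hP hσ)
      (fun s _ => ?_) ((tendsto_const_nhds (x := (C + 1) / 2)).add hu) t ht
    · have hw : 0 < √(ξ t ^ 2 + 1) := by positivity
      have hwt := sqrt_sq_add_one_le (hξ t ht)
      rw [add_zero, mul_div_assoc', mul_div_assoc', ← add_div, div_le_iff₀ hw] at hle
      nlinarith
    · have hw : 0 < √(ξ s ^ 2 + 1) := by positivity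
      have h1 : ξ s / √(ξ s ^ 2 + 1) ≤ 1 := div_le_one_of_le₀ (le_sqrt_sq_add_one _) hw.le
      have h2 : σ * ((m₃ s * ξ s - m₂ s / 2) / √(ξ s ^ 2 + 1))
          ≤ |m₃ s * ξ s - m₂ s / 2| / √(ξ s ^ 2 + 1) := by
        rw [mul_div_assoc', div_le_div_iff_of_pos_right hw]
        exact (le_abs_self _).trans
          ((abs_mul _ _).trans_le (mul_le_of_le_one_left (abs_nonneg _) hσ))
      nlinarith
  exact abs_le.2 ⟨by linarith [hσ (-1) (by norm_num)], by linarith [hσ 1 (by norm_num)]⟩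

end IsSolution

end ReducedTwoBody

/-- Along a collision solution with `t* < ∞` and `ξ(t) → +∞` as `t → t*⁻`, `m₃`
decays at least like `1/ξ`: there are `M > 0` and `t₁ ∈ [t₀, t*)` with
`|m₃(t)|·ξ(t) ≤ M` on `[t₁, t*)`. -/
theorem m3_le_inv_xi
    (t0 tstar : ℝ) (ht0 : t0 < tstar)
    (m1 m2 m3 xi p : ℝ → ℝ)
    (hm1 : ∀ t ∈ Set.Ico t0 tstar,
      HasDerivAt m1 (xi t * (-(m2 t)^2 + (m3 t)^2 + 2 * m2 t * m3 t * xi t)) t)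
    (hm2 : ∀ t ∈ Set.Ico t0 tstar,
      HasDerivAt m2 (m1 t * m2 t * xi t - m3 t * p t - 2 * m1 t * m3 t * (xi t)^2) t)
    (hm3 : ∀ t ∈ Set.Ico t0 tstar,
      HasDerivAt m3 (m2 t * p t - m1 t * m3 t * xi t) t)
    (hxi : ∀ t ∈ Set.Ico t0 tstar,
      HasDerivAt xi (-((xi t)^2 + 1) * (2 * p t - m1 t)) t)
    (hp : ∀ t ∈ Set.Ico t0 tstar,
      HasDerivAt p (-((xi t)^2 + 1) * (1 + m2 t * m3 t - 2 * (m3 t)^2 * xi t)) t)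
    (hcoll : Tendsto xi (nhdsWithin tstar (Set.Iio tstar)) atTop) :
    ∃ M > (0 : ℝ), ∃ t1 ∈ Set.Ico t0 tstar,
      ∀ t ∈ Set.Ico t1 tstar, |m3 t| * xi t ≤ M := by
  have h : ReducedTwoBody.IsSolution (Ico t0 tstar) m1 m2 m3 xi p := ⟨hm1, hm2, hm3, hxi, hp⟩
  obtain ⟨t1, ht1, htail⟩ := h.exists_forall_Ico_nonneg_and_le_neg_one ht0 hcoll
  have h1 := h.mono (Ico_subset_Ico_left ht1.1)
  set N := ReducedTwoBody.momentumSq m1 m2 m3 t1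
  have hN : 0 ≤ N := ReducedTwoBody.momentumSq_nonneg m1 m2 m3 t1
  refine ⟨N + 1, by linarith, t1, ht1, fun t ht => ?_⟩
  have hu : |m3 t * xi t - m2 t / 2| ≤ (N + 1) / 2 :=
    h1.abs_sub_le hcoll (fun s hs => (htail s hs).1) (fun s hs => (htail s hs).2)
      (fun s hs => ⟨(h1.sq_le_momentumSq hs).1, (h1.sq_le_momentumSq hs).2.2⟩) t ht
  have hm2 : |m2 t| ≤ (N + 1) / 2 := by
    nlinarith [(h1.sq_le_momentumSq ht).2.1, sq_abs (m2 t), two_mul_le_add_sq |m2 t| 1]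
  calc |m3 t| * xi t = |m3 t * xi t| := by rw [abs_mul, abs_of_nonneg (htail t ht).1]
    _ ≤ |m3 t * xi t - m2 t / 2| + |m2 t| / 2 := by
      have : |m2 t / 2| = |m2 t| / 2 := by rw [abs_div, abs_two]
      linarith [abs_sub_abs_le_abs_sub (m3 t * xi t) (m2 t / 2)]
    _ ≤ N + 1 := by linarith
end
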